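/- arXiv:1605.09663 — 4 statements merged into one kernel-verified Lean document; each statement's English description precedes it below -/
import Mathlib

section
/- If c ≥ -2 and a^2 = (2/3)(sqrt(c^2+12) - c), then the function ρ_V(x) = (1/π)(x^2/2 + b_0) sqrt(a^2 - x^2) on [-a,a], with b_0 = (1/3)(c + sqrt(c^2/4 + 3)), is nonnegative on [-a,a]. -/
open Real

theorem equilibrium_density_nonneg
    (c a b₀ : ℝ) (hc : -2 ≤ c) (ha : 0 < a)
    (ha2 : a ^ 2 = 2 / 3 * (Real.sqrt (c ^ 2 + 12) - c))
    (hb₀ : b₀ = 1 / 3 * (c + Real.sqrt (c ^ 2 / 4 + 3))) :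
    ∀ x ∈ Set.Icc (-a) a,
      0 ≤ (1 / π) * (x ^ 2 / 2 + b₀) * Real.sqrt (a ^ 2 - x ^ 2) := by
  intro x hx
  have hs0 : 0 ≤ Real.sqrt (c ^ 2 / 4 + 3) := Real.sqrt_nonneg _
  have hs : Real.sqrt (c ^ 2 / 4 + 3) ^ 2 = c ^ 2 / 4 + 3 := by
    rw [Real.sq_sqrt]; nlinarith [sq_nonneg c]
  have hb : 0 ≤ b₀ := by
    rw [hb₀]
    nlinarith [hs0, hs, sq_nonneg (c + Real.sqrt (c ^ 2 / 4 + 3))]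
  have h1 : 0 ≤ x ^ 2 / 2 + b₀ := by positivity
  have h2 : 0 ≤ Real.sqrt (a ^ 2 - x ^ 2) := Real.sqrt_nonneg _
  have hpi : 0 < (1 : ℝ) / π := by positivity
  positivity
end

section
/- The polynomial f(x,c) = 45x^4 + 156cx^3 + (182c^2 - 552)x^2 + (76c^3 - 880c)x + 5c^4 - 200c^2 + 2000 is strictly positive at every point of the compact set K = {(x,c) : -2 ≤ c ≤ 0, 0 ≤ x ≤ -5c/3}. -/
theorem quartic_case_polynomial_pos_on_K :
    ∀ x c : ℝ, -2 ≤ c → c ≤ 0 → 0 ≤ x → x ≤ -5 * c / 3 →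
      0 < 45 * x ^ 4 + 156 * c * x ^ 3 + (182 * c ^ 2 - 552) * x ^ 2
            + (76 * c ^ 3 - 880 * c) * x + 5 * c ^ 4 - 200 * c ^ 2 + 2000 := by
  intro x c h1 h2 h3 h4
  have hu : (0:ℝ) ≤ -c := by linarith
  have h5 : (0:ℝ) ≤ -5*c/3 - x := by linarith
  have h6 : (0:ℝ) ≤ c + 2 := by linarith
  nlinarith [mul_nonneg h3 h5, mul_nonneg hu h6, mul_nonneg (mul_nonneg h3 h5) (mul_nonneg hu h6), mul_nonneg (mul_nonneg h3 h5) (mul_nonneg h3 h5), mul_nonneg (mul_nonneg hu h6) (mul_nonneg hu h6), mul_nonneg (mul_nonneg h3 h3) (mul_nonneg h5 h5), mul_nonneg (mul_nonneg h3 h5) (mul_nonneg h3 hu), mul_nonneg (mul_nonneg h3 h5) (mul_nonneg h5 hu), sq_nonneg (x+c), sq_nonneg (3*x+5*c), sq_nonneg x, sq_nonneg c]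
end

section
/- The only critical point of f(x,c) = 45x^4 + 156cx^3 + (182c^2-552)x^2 + (76c^3-880c)x + 5c^4 - 200c^2 + 2000 lying in the set K = {(x,c) : -2 ≤ c ≤ 0, 0 ≤ x ≤ -5c/3} is (0,0), i.e., the only point of K where both partial derivatives ∂f/∂x and ∂f/∂c vanish is (0,0). -/
/-!
Writing `t = -c ≥ 0`, the combination `2 ∂ₓf - 3 ∂_c f` equals `432 x + 560 t` plus a cubic, and on `K`
(where `x ≤ 5t/3` and `t ≤ 2`) the cubic is at least `-92 t³ ≥ -368 t`. Hence `2 ∂ₓf - 3 ∂_c f ≥ 192 t`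
on `K`, so at a critical point in `K` we get `c = 0`, and then `0 ≤ x ≤ -5c/3` forces `x = 0`.
-/

theorem hasDerivAt_quartic {𝕜 : Type*} [NontriviallyNormedField 𝕜] (a b c d e x : 𝕜) :
    HasDerivAt (fun y => a * y ^ 4 + b * y ^ 3 + c * y ^ 2 + d * y + e)
      (4 * a * x ^ 3 + 3 * b * x ^ 2 + 2 * c * x + d) x := by
  have h := ((((hasDerivAt_pow 4 x).const_mul a).fun_add
    ((hasDerivAt_pow 3 x).const_mul b)).fun_add ((hasDerivAt_pow 2 x).const_mul c)).fun_add
    ((hasDerivAt_id' x).const_mul d) |>.add_const e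
  refine h.congr_deriv ?_
  norm_num
  ring

section CriticalPoints

variable {f : ℝ → ℝ → ℝ}
  (hf : ∀ x c, f x c = 45 * x ^ 4 + 156 * c * x ^ 3 + (182 * c ^ 2 - 552) * x ^ 2
    + (76 * c ^ 3 - 880 * c) * x + 5 * c ^ 4 - 200 * c ^ 2 + 2000)
include hf

theorem deriv_fst_eq (x c : ℝ) : deriv (fun y => f y c) x =
    180 * x ^ 3 + 468 * c * x ^ 2 + (364 * c ^ 2 - 1104) * x + 76 * c ^ 3 - 880 * c := by
  have hquartic : (fun y => f y c) = fun y => 45 * y ^ 4 + 156 * c * y ^ 3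
      + (182 * c ^ 2 - 552) * y ^ 2 + (76 * c ^ 3 - 880 * c) * y
      + (5 * c ^ 4 - 200 * c ^ 2 + 2000) := by
    funext y
    rw [hf]
    ring
  rw [hquartic, (hasDerivAt_quartic _ _ _ _ _ x).deriv]
  ring

theorem deriv_snd_eq (x c : ℝ) : deriv (fun d => f x d) c =
    156 * x ^ 3 + 364 * c * x ^ 2 + (228 * c ^ 2 - 880) * x + 20 * c ^ 3 - 400 * c := by
  have hquartic : (fun d => f x d) = fun d => 5 * d ^ 4 + 76 * x * d ^ 3
      + (182 * x ^ 2 - 200) * d ^ 2 + (156 * x ^ 3 - 880 * x) * d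
      + (45 * x ^ 4 - 552 * x ^ 2 + 2000) := by
    funext d
    rw [hf]
    ring
  rw [hquartic, (hasDerivAt_quartic _ _ _ _ _ c).deriv]
  ring

theorem neg_mul_le_two_mul_deriv_fst_sub_three_mul_deriv_snd {x c : ℝ}
    (hc₂ : -2 ≤ c) (hc₀ : c ≤ 0) (hx : 0 ≤ x) (hxc : x ≤ -5 * c / 3) :
    -192 * c ≤ 2 * deriv (fun y => f y c) x - 3 * deriv (fun d => f x d) c := by
  rw [deriv_fst_eq hf, deriv_snd_eq hf]
  have ht : 0 ≤ -c := by linarith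
  have hgap : 0 ≤ -5 * c - 3 * x := by linarith
  linear_combination 432 * hx + 36 * mul_nonneg (mul_nonneg hx hx) hgap
    + 8 * mul_nonneg (mul_nonneg ht hx) hgap + 4 * mul_nonneg (mul_nonneg ht ht) hx
    + 92 * mul_nonneg (mul_nonneg ht (by linarith : (0 : ℝ) ≤ 2 - c)) (by linarith : 0 ≤ 2 + c)

end CriticalPoints

theorem unique_critical_point_in_K (f : ℝ → ℝ → ℝ)
    (hf : ∀ x c, f x c = 45 * x ^ 4 + 156 * c * x ^ 3 + (182 * c ^ 2 - 552) * x ^ 2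
            + (76 * c ^ 3 - 880 * c) * x + 5 * c ^ 4 - 200 * c ^ 2 + 2000) :
    ∀ x c : ℝ, -2 ≤ c → c ≤ 0 → 0 ≤ x → x ≤ -5 * c / 3 →
      deriv (fun y => f y c) x = 0 → deriv (fun d => f x d) c = 0 →
      x = 0 ∧ c = 0 := by
  intro x c hc₂ hc₀ hx hxc hdx hdc
  have hbound := neg_mul_le_two_mul_deriv_fst_sub_three_mul_deriv_snd hf hc₂ hc₀ hx hxc
  rw [hdx, hdc] at hbound
  have hc : c = 0 := by linarith
  exact ⟨by linarith, hc⟩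
end

section
/- Let a < b and c be real. Then for x in (a,b), the principal value integral (1/(2π²))·sqrt((x-a)(b-x))·p.v.∫_a^b (t^3+ct)/((t-x)sqrt((t-a)(b-t))) dt equals (1/(2π)) sqrt((x-a)(b-x)) (x^2 + ((a+b)/2)x + (3/8)b^2 + (1/4)ab + (3/8)a^2 + c). -/
/-!
Split the numerator as `t ^ 3 + c t = (t - x) (t ^ 2 + x t + x ^ 2 + c) + (x ^ 3 + c x)`.
The first part gives `(t ^ 2 + x t + x ^ 2 + c) / √((t - a)(b - t))`, which has an antiderivative
of the form `A · arcsin ((t - m) / r) - L(t) √((t - a)(b - t))` with `m, r` the midpoint and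
radius of `[a, b]`; its increment over `[a, b]` is `π A`. The second part is `x ^ 3 + c x` times
the Cauchy kernel `1 / ((t - x) √((t - a)(b - t)))`, integrated by Euler's substitution to
`(log |t - x| - log N(t)) / √((x - a)(b - x))` with `N` continuous and positive on `[a, b]`.
Only `log |t - x|` is singular at `x`, and being even about `x` it cancels in the symmetric
limit; at the endpoints it cancels against `log N`, since `N a = (x - a)(b - a)/2` and
`N b = (b - x)(b - a)/2`. What remains is `π A`.
-/

open Real MeasureTheory Filter Set Topology

theorem Icc_diff_Ioo_eq_union {a b u v : ℝ} (hau : a ≤ u) (huv : u ≤ v) (hvb : v ≤ b) :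
    Icc a b \ Ioo u v = Icc a u ∪ Icc v b := by
  ext t
  simp only [Set.mem_sdiff, mem_Icc, mem_Ioo, mem_union]
  grind

/-- `Real.log` is even, so `log (s - x)` stands for `log |s - x|`. -/
theorem integral_Icc_diff_Ioo_eq_of_hasDerivAt_add_log {f Φ : ℝ → ℝ} {a b x k ε : ℝ}
    (hΦ : ContinuousOn Φ (Icc a b))
    (hderiv : ∀ t ∈ Ioo a b, t ≠ x → HasDerivAt (fun s => Φ s + k * log (s - x)) (f t) t)
    (hint : ∀ u ∈ Icc a b, ∀ v ∈ Icc a b, x ∉ uIcc u v → IntervalIntegrable f volume u v)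
    (hε : 0 < ε) (hεa : ε < x - a) (hεb : ε < b - x) :
    ∫ t in Icc a b \ Ioo (x - ε) (x + ε), f t =
      Φ (x - ε) - Φ (x + ε) + (Φ b - Φ a + k * (log (b - x) - log (x - a))) := by
  set Ψ := fun s => Φ s + k * log (s - x)
  have hftc : ∀ u v, a ≤ u → u ≤ v → v ≤ b → x ∉ Icc u v → ∫ t in u..v, f t = Ψ v - Ψ u := by
    intro u v hau huv hvb hx
    have hcont : ContinuousOn Ψ (Icc u v) :=
      (hΦ.mono (Icc_subset_Icc hau hvb)).add <| continuousOn_const.mul <|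
        (continuousOn_id.sub continuousOn_const).log fun t ht => sub_ne_zero.2 (ht.ne_of_notMem hx)
    refine intervalIntegral.integral_eq_sub_of_hasDeriv_right_of_le huv hcont (fun t ht => ?_)
      (hint u ⟨hau, huv.trans hvb⟩ v ⟨hau.trans huv, hvb⟩ (uIcc_of_le huv ▸ hx))
    exact (hderiv t ⟨hau.trans_lt ht.1, ht.2.trans_le hvb⟩
      (fun h => hx (h ▸ Ioo_subset_Icc_self ht))).hasDerivWithinAt
  have hL := hint a ⟨le_rfl, by linarith⟩ (x - ε) ⟨by linarith, by linarith⟩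
    (by rw [uIcc_of_le (by linarith)]; exact fun h => by linarith [h.2])
  have hR := hint (x + ε) ⟨by linarith, by linarith⟩ b ⟨by linarith, le_rfl⟩
    (by rw [uIcc_of_le (by linarith)]; exact fun h => by linarith [h.1])
  have hdisj : Disjoint (Icc a (x - ε)) (Icc (x + ε) b) :=
    disjoint_left.2 fun t ht ht' => by linarith [ht.2, ht'.1]
  rw [Icc_diff_Ioo_eq_union (by linarith) (by linarith) (by linarith),
    setIntegral_union hdisj measurableSet_Icc
      ((intervalIntegrable_iff_integrableOn_Icc_of_le (by linarith)).1 hL)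
      ((intervalIntegrable_iff_integrableOn_Icc_of_le (by linarith)).1 hR),
    integral_Icc_eq_integral_Ioc, integral_Icc_eq_integral_Ioc,
    ← intervalIntegral.integral_of_le (by linarith),
    ← intervalIntegral.integral_of_le (by linarith),
    hftc a (x - ε) le_rfl (by linarith) (by linarith) (fun h => by linarith [h.2]),
    hftc (x + ε) b (by linarith) (by linarith) le_rfl (fun h => by linarith [h.1])]
  simp only [Ψ, show x - ε - x = -ε by ring, show a - x = -(x - a) by ring, add_sub_cancel_left,
    log_neg_eq_log]
  ring

theorem tendsto_integral_Icc_diff_Ioo_of_hasDerivAt_add_log {f Φ : ℝ → ℝ} {a b x k : ℝ}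
    (hax : a < x) (hxb : x < b) (hΦ : ContinuousOn Φ (Icc a b))
    (hderiv : ∀ t ∈ Ioo a b, t ≠ x → HasDerivAt (fun s => Φ s + k * log (s - x)) (f t) t)
    (hint : ∀ u ∈ Icc a b, ∀ v ∈ Icc a b, x ∉ uIcc u v → IntervalIntegrable f volume u v) :
    Tendsto (fun ε => ∫ t in Icc a b \ Ioo (x - ε) (x + ε), f t) (𝓝[>] 0)
      (𝓝 (Φ b - Φ a + k * (log (b - x) - log (x - a)))) := by
  have hΦx : ContinuousAt Φ x := hΦ.continuousAt (Icc_mem_nhds hax hxb)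
  have hsym : ContinuousAt (fun ε => Φ (x - ε) - Φ (x + ε)) 0 :=
    (hΦx.comp_of_eq (by fun_prop) (sub_zero x)).sub (hΦx.comp_of_eq (by fun_prop) (add_zero x))
  have hlim := (hsym.tendsto.mono_left (nhdsWithin_le_nhds (s := Ioi 0))).add_const
    (Φ b - Φ a + k * (log (b - x) - log (x - a)))
  rw [sub_zero, add_zero, sub_self, zero_add] at hlim
  refine hlim.congr' ?_
  filter_upwards [Ioo_mem_nhdsGT (lt_min (sub_pos.2 hax) (sub_pos.2 hxb))] with ε ⟨hε, hεmin⟩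
  exact (integral_Icc_diff_Ioo_eq_of_hasDerivAt_add_log hΦ hderiv hint hε
    (hεmin.trans_le (min_le_left _ _)) (hεmin.trans_le (min_le_right _ _))).symm

section SqrtWeight

variable {a b t : ℝ}

theorem hasDerivAt_sqrt_mul_sub (ht : t ∈ Ioo a b) :
    HasDerivAt (fun s => √((s - a) * (b - s)))
      ((a + b - 2 * t) / (2 * √((t - a) * (b - t)))) t := by
  have hQ : (t - a) * (b - t) ≠ 0 := (mul_pos (sub_pos.2 ht.1) (sub_pos.2 ht.2)).ne'
  have hpoly : HasDerivAt (fun s => (s - a) * (b - s)) (a + b - 2 * t) t := by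
    refine (((hasDerivAt_id' t).sub_const a).mul ((hasDerivAt_id' t).const_sub b)).congr_deriv ?_
    ring
  exact hpoly.sqrt hQ

theorem hasDerivAt_arcsin_div (ht : t ∈ Ioo a b) :
    HasDerivAt (fun s => arcsin ((s - (a + b) / 2) / ((b - a) / 2)))
      (√((t - a) * (b - t)))⁻¹ t := by
  have hr : 0 < (b - a) / 2 := by linarith [ht.1, ht.2]
  have hba : b - a ≠ 0 := by linarith [ht.1, ht.2]
  have hQ : 0 < (t - a) * (b - t) := mul_pos (sub_pos.2 ht.1) (sub_pos.2 ht.2)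
  have hlin : HasDerivAt (fun s => (s - (a + b) / 2) / ((b - a) / 2)) ((b - a) / 2)⁻¹ t := by
    simpa using ((hasDerivAt_id t).sub_const ((a + b) / 2)).div_const ((b - a) / 2)
  have hne1 : (t - (a + b) / 2) / ((b - a) / 2) ≠ 1 := by
    rw [Ne, div_eq_one_iff_eq hr.ne']; linarith [ht.2]
  have hne2 : (t - (a + b) / 2) / ((b - a) / 2) ≠ -1 := by
    rw [Ne, div_eq_iff hr.ne']; linarith [ht.1]
  refine ((hasDerivAt_arcsin hne2 hne1).comp t hlin).congr_deriv ?_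
  have hsq : 1 - ((t - (a + b) / 2) / ((b - a) / 2)) ^ 2 =
      (t - a) * (b - t) / ((b - a) / 2) ^ 2 := by
    field_simp; ring
  rw [hsq, sqrt_div' _ (by positivity), sqrt_sq hr.le]
  field_simp

theorem intervalIntegrable_inv_sqrt_mul_sub (hab : a ≤ b) :
    IntervalIntegrable (fun t => (√((t - a) * (b - t)))⁻¹) volume a b := by
  rw [intervalIntegrable_iff_integrableOn_Ioc_of_le hab]
  exact intervalIntegral.integrableOn_deriv_of_nonneg (by fun_prop)
    (fun t ht => hasDerivAt_arcsin_div ht) (fun t _ => by positivity)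

theorem intervalIntegrable_div_sqrt_mul_sub {g : ℝ → ℝ} {u v : ℝ} (hu : u ∈ Icc a b)
    (hv : v ∈ Icc a b) (hg : ContinuousOn g (uIcc u v)) :
    IntervalIntegrable (fun t => g t / √((t - a) * (b - t))) volume u v := by
  have hab : a ≤ b := hu.1.trans hu.2
  have hsub : uIcc u v ⊆ uIcc a b := by
    rw [uIcc_of_le hab]; exact uIcc_subset_Icc hu hv
  simpa only [div_eq_mul_inv] using
    ((intervalIntegrable_inv_sqrt_mul_sub hab).mono_set hsub).continuousOn_mul hg

end SqrtWeight

noncomputable def quadDivSqrtAntideriv (a b p q t : ℝ) : ℝ :=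
  (((b - a) / 2) ^ 2 / 2 + ((a + b) / 2) ^ 2 + p * ((a + b) / 2) + q) *
      arcsin ((t - (a + b) / 2) / ((b - a) / 2)) -
    ((t - (a + b) / 2) / 2 + 2 * ((a + b) / 2) + p) * √((t - a) * (b - t))

theorem continuous_quadDivSqrtAntideriv (a b p q : ℝ) :
    Continuous (quadDivSqrtAntideriv a b p q) := by
  unfold quadDivSqrtAntideriv; fun_prop

theorem hasDerivAt_quadDivSqrtAntideriv {a b p q t : ℝ} (ht : t ∈ Ioo a b) :
    HasDerivAt (quadDivSqrtAntideriv a b p q)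
      ((t ^ 2 + p * t + q) / √((t - a) * (b - t))) t := by
  have hQ : 0 < (t - a) * (b - t) := mul_pos (sub_pos.2 ht.1) (sub_pos.2 ht.2)
  have hS : 0 < √((t - a) * (b - t)) := sqrt_pos.2 hQ
  have hS2 : √((t - a) * (b - t)) ^ 2 = (t - a) * (b - t) := sq_sqrt hQ.le
  have hlin : HasDerivAt (fun s => (s - (a + b) / 2) / 2 + 2 * ((a + b) / 2) + p) (1 / 2) t := by
    simpa using (((hasDerivAt_id' t).sub_const ((a + b) / 2)).div_const 2).add_const
      (2 * ((a + b) / 2) + p)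
  refine (((hasDerivAt_arcsin_div ht).const_mul _).sub
    (hlin.mul (hasDerivAt_sqrt_mul_sub ht))).congr_deriv ?_
  field_simp
  linear_combination -4 * hS2

theorem quadDivSqrtAntideriv_sub {a b : ℝ} (hab : a < b) (p q : ℝ) :
    quadDivSqrtAntideriv a b p q b - quadDivSqrtAntideriv a b p q a =
      π * (((b - a) / 2) ^ 2 / 2 + ((a + b) / 2) ^ 2 + p * ((a + b) / 2) + q) := by
  have hr : (b - a) / 2 ≠ 0 := by linarith
  have h1 : (b - (a + b) / 2) / ((b - a) / 2) = 1 := by rw [div_eq_one_iff_eq hr]; ring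
  have h2 : (a - (a + b) / 2) / ((b - a) / 2) = -1 := by rw [div_eq_iff hr]; ring
  simp only [quadDivSqrtAntideriv, h1, h2, arcsin_one, arcsin_neg, sub_self, mul_zero, zero_mul,
    sqrt_zero]
  ring

/-- Euler's substitution gives `(log |t - x| - log (eulerNumerator a b x t)) / √((x - a) * (b - x))`
as an antiderivative of `1 / ((t - x) * √((t - a) * (b - t)))`. -/
noncomputable def eulerNumerator (a b x t : ℝ) : ℝ :=
  (x - a) * (b - x) + (t - x) * ((a + b) / 2 - x) + √((x - a) * (b - x)) * √((t - a) * (b - t))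

theorem continuous_eulerNumerator (a b x : ℝ) : Continuous (eulerNumerator a b x) := by
  unfold eulerNumerator; fun_prop

section EulerNumerator

variable {a b x t : ℝ}

theorem eulerNumerator_pos (hx : x ∈ Ioo a b) (ht : t ∈ Icc a b) : 0 < eulerNumerator a b x t := by
  have hlin : 0 < (b - t) * (x - a) + (t - a) * (b - x) := by
    rcases ht.2.lt_or_eq with htb | rfl
    · nlinarith [mul_pos (sub_pos.2 htb) (sub_pos.2 hx.1),
        mul_nonneg (sub_nonneg.2 ht.1) (sub_pos.2 hx.2).le]
    · nlinarith [mul_pos (sub_pos.2 (hx.1.trans hx.2)) (sub_pos.2 hx.2)]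
  unfold eulerNumerator
  nlinarith [mul_nonneg (sqrt_nonneg ((x - a) * (b - x))) (sqrt_nonneg ((t - a) * (b - t)))]

theorem eulerNumerator_left : eulerNumerator a b x a = (x - a) * ((b - a) / 2) := by
  simp only [eulerNumerator, sub_self, zero_mul, sqrt_zero, mul_zero]; ring

theorem eulerNumerator_right : eulerNumerator a b x b = (b - x) * ((b - a) / 2) := by
  simp only [eulerNumerator, sub_self, mul_zero, sqrt_zero]; ring

theorem hasDerivAt_log_sub_log_eulerNumerator (hx : x ∈ Ioo a b) (ht : t ∈ Ioo a b) (htx : t ≠ x) :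
    HasDerivAt (fun s => log (s - x) - log (eulerNumerator a b x s))
      (√((x - a) * (b - x)) / ((t - x) * √((t - a) * (b - t)))) t := by
  have hW : 0 < (x - a) * (b - x) := mul_pos (sub_pos.2 hx.1) (sub_pos.2 hx.2)
  have hQ : 0 < (t - a) * (b - t) := mul_pos (sub_pos.2 ht.1) (sub_pos.2 ht.2)
  set w := √((x - a) * (b - x)) with hw
  set S := √((t - a) * (b - t)) with hS
  have hw0 : 0 < w := sqrt_pos.2 hW
  have hS0 : 0 < S := sqrt_pos.2 hQ
  have hw2 : w ^ 2 = (x - a) * (b - x) := sq_sqrt hW.le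
  have hS2 : S ^ 2 = (t - a) * (b - t) := sq_sqrt hQ.le
  have htx' : t - x ≠ 0 := sub_ne_zero.2 htx
  have hN := eulerNumerator_pos hx (Ioo_subset_Icc_self ht)
  have hderivN : HasDerivAt (eulerNumerator a b x)
      ((a + b) / 2 - x + w * ((a + b - 2 * t) / (2 * S))) t := by
    have hlin : HasDerivAt (fun s => (x - a) * (b - x) + (s - x) * ((a + b) / 2 - x))
        ((a + b) / 2 - x) t := by
      simpa using (((hasDerivAt_id' t).sub_const x).mul_const ((a + b) / 2 - x)).const_add
        ((x - a) * (b - x))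
    exact hlin.add ((hasDerivAt_sqrt_mul_sub ht).const_mul w)
  have hlogN : ((a + b) / 2 - x + w * ((a + b - 2 * t) / (2 * S))) / eulerNumerator a b x t =
      (S - w) / ((t - x) * S) := by
    rw [div_eq_div_iff hN.ne' (by positivity)]
    simp only [eulerNumerator, ← hw, ← hS]
    field_simp
    linear_combination (2 * S) * hw2 - (2 * w) * hS2
  refine ((((hasDerivAt_id' t).sub_const x).log htx').sub (hderivN.log hN.ne')).congr_deriv ?_
  rw [hlogN]
  field_simp
  ring

end EulerNumerator

theorem intervalIntegrable_cubic_div_sqrt {a b c x u v : ℝ} (hu : u ∈ Icc a b) (hv : v ∈ Icc a b)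
    (hx : x ∉ uIcc u v) :
    IntervalIntegrable (fun t => (t ^ 3 + c * t) / ((t - x) * √((t - a) * (b - t))))
      volume u v := by
  have hg : ContinuousOn (fun t => (t ^ 3 + c * t) / (t - x)) (uIcc u v) :=
    (by fun_prop : Continuous fun t => t ^ 3 + c * t).continuousOn.div (by fun_prop)
      fun t ht => sub_ne_zero.2 (ht.ne_of_notMem hx)
  simpa only [div_div] using intervalIntegrable_div_sqrt_mul_sub hu hv hg

theorem hasDerivAt_cubic_div_antideriv {a b c x t : ℝ} (hx : x ∈ Ioo a b) (ht : t ∈ Ioo a b)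
    (htx : t ≠ x) :
    HasDerivAt (fun s => quadDivSqrtAntideriv a b x (x ^ 2 + c) s -
        (x ^ 3 + c * x) / √((x - a) * (b - x)) * log (eulerNumerator a b x s) +
        (x ^ 3 + c * x) / √((x - a) * (b - x)) * log (s - x))
      ((t ^ 3 + c * t) / ((t - x) * √((t - a) * (b - t)))) t := by
  have hw : 0 < √((x - a) * (b - x)) := sqrt_pos.2 (mul_pos (sub_pos.2 hx.1) (sub_pos.2 hx.2))
  have hS : 0 < √((t - a) * (b - t)) := sqrt_pos.2 (mul_pos (sub_pos.2 ht.1) (sub_pos.2 ht.2))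
  have htx' : t - x ≠ 0 := sub_ne_zero.2 htx
  have h := (hasDerivAt_quadDivSqrtAntideriv (p := x) (q := x ^ 2 + c) ht).add
    ((hasDerivAt_log_sub_log_eulerNumerator hx ht htx).const_mul
      ((x ^ 3 + c * x) / √((x - a) * (b - x))))
  refine (h.congr_deriv ?_).congr_of_eventuallyEq (Eventually.of_forall fun s => ?_)
  · field_simp; ring
  · simp only [Pi.add_apply]; ring

theorem principal_value_singular_integral_general
    (a b c x : ℝ) (hx : x ∈ Set.Ioo a b) :
    Filter.Tendsto
      (fun ε : ℝ =>
        1 / (2 * π ^ 2) * Real.sqrt ((x - a) * (b - x)) *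
          ∫ t in Set.Icc a b \ Set.Ioo (x - ε) (x + ε),
            (t ^ 3 + c * t) / ((t - x) * Real.sqrt ((t - a) * (b - t))))
      (nhdsWithin 0 (Set.Ioi 0))
      (nhds (1 / (2 * π) * Real.sqrt ((x - a) * (b - x)) *
        (x ^ 2 + (a + b) / 2 * x + 3 / 8 * b ^ 2 + 1 / 4 * a * b + 3 / 8 * a ^ 2 + c))) := by
  have hab : a < b := hx.1.trans hx.2
  set w := √((x - a) * (b - x))
  set k := (x ^ 3 + c * x) / w
  set Φ := fun s => quadDivSqrtAntideriv a b x (x ^ 2 + c) s - k * log (eulerNumerator a b x s)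
  have hΦ : ContinuousOn Φ (Icc a b) :=
    (continuous_quadDivSqrtAntideriv a b x _).continuousOn.sub <| continuousOn_const.mul <|
      (continuous_eulerNumerator a b x).continuousOn.log fun t ht => (eulerNumerator_pos hx ht).ne'
  have hPV := tendsto_integral_Icc_diff_Ioo_of_hasDerivAt_add_log hx.1 hx.2 hΦ
    (fun t ht htx => hasDerivAt_cubic_div_antideriv hx ht htx)
    (fun u hu v hv hxuv => intervalIntegrable_cubic_div_sqrt hu hv hxuv)
  have hval : Φ b - Φ a + k * (log (b - x) - log (x - a)) =
      π * (((b - a) / 2) ^ 2 / 2 + ((a + b) / 2) ^ 2 + x * ((a + b) / 2) + (x ^ 2 + c)) := by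
    have hr : (b - a) / 2 ≠ 0 := by linarith
    simp only [Φ, eulerNumerator_left, eulerNumerator_right]
    rw [log_mul (sub_pos.2 hx.2).ne' hr, log_mul (sub_pos.2 hx.1).ne' hr]
    linear_combination quadDivSqrtAntideriv_sub hab x (x ^ 2 + c)
  convert hPV.const_mul (1 / (2 * π ^ 2) * w) using 2
  rw [hval]
  field_simp
  ring

theorem principal_value_singular_integral
    (a b c x : ℝ) (hab : a < b) (hx : x ∈ Set.Ioo a b) :
    Filter.Tendsto
      (fun ε : ℝ =>
        1 / (2 * π ^ 2) * Real.sqrt ((x - a) * (b - x)) *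
          ∫ t in Set.Icc a b \ Set.Ioo (x - ε) (x + ε),
            (t ^ 3 + c * t) / ((t - x) * Real.sqrt ((t - a) * (b - t))))
      (nhdsWithin 0 (Set.Ioi 0))
      (nhds (1 / (2 * π) * Real.sqrt ((x - a) * (b - x)) *
        (x ^ 2 + (a + b) / 2 * x + 3 / 8 * b ^ 2 + 1 / 4 * a * b + 3 / 8 * a ^ 2 + c))) :=
  principal_value_singular_integral_general a b c x hx
end
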